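/- Let S_n be the elephant random walk with memory parameter p ∈ (0,1) and first-step parameter q ∈ [0,1], and set α = 2p−1. If −1 < α < 1/2, then for every k ∈ ℕ, E[(S_n/√(n/(1−2α)))^k] converges as n → ∞ to μ_k, the k-th moment of the standard normal distribution (μ_k = 0 for k odd, μ_{2m} = (2m−1)!!). -/

import Mathlib

open MeasureTheory ProbabilityTheory Filter Asymptotics

noncomputable section

/-- The σ-algebra 𝓕ₙ = σ(X₁, …, Xₙ) generated by the first `n` steps. -/
def erwFiltration {Ω : Type*} (X : ℕ → Ω → ℝ) (n : ℕ) : MeasurableSpace Ω :=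
  ⨆ i ∈ Finset.Icc 1 n, MeasurableSpace.comap (X i) inferInstance

/-- The position `Sₙ = X₁ + ⋯ + Xₙ` of the walk. -/
def erwS {Ω : Type*} (X : ℕ → Ω → ℝ) (n : ℕ) (ω : Ω) : ℝ :=
  ∑ i ∈ Finset.Icc 1 n, X i ω

/-- `X` is an elephant random walk (sequence of ±1 steps) with memory parameter
`p ∈ (0,1)` and first-step parameter `q ∈ [0,1]`:  `X₁ = 1` with probability `q`
(and `= -1` with probability `1-q`), and given `𝓕ₙ`, the step `X_{n+1}` equals `±1`
with conditional probability `(1 ± α Sₙ/n)/2`, where `α = 2p-1`. -/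
structure IsERW {Ω : Type*} [MeasurableSpace Ω] (μ : Measure Ω)
    (p q : ℝ) (X : ℕ → Ω → ℝ) : Prop where
  hp : p ∈ Set.Ioo (0:ℝ) 1
  hq : q ∈ Set.Icc (0:ℝ) 1
  prob : IsProbabilityMeasure μ
  meas : ∀ n, Measurable (X n)
  pm_one : ∀ n, 1 ≤ n → ∀ᵐ ω ∂μ, X n ω = 1 ∨ X n ω = -1
  first_step : μ {ω | X 1 ω = 1} = ENNReal.ofReal q
  cond : ∀ n, 1 ≤ n →
    μ[({ω' | X (n + 1) ω' = 1}.indicator fun _ => (1:ℝ)) | erwFiltration X n]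
      =ᵐ[μ] fun ω => (1 + (2 * p - 1) * erwS X n ω / n) / 2

/-- The odd double factorial `(2m-1)!! = 1·3·⋯·(2m-1)`. -/
def doubleFactOdd (m : ℕ) : ℝ := ∏ j ∈ Finset.range m, (2 * (j:ℝ) + 1)

end

/-- The k-th moment of the standard normal distribution: 0 for odd k and
(2m−1)!! for k = 2m. -/
def gaussMoment (k : ℕ) : ℝ :=
  if Odd k then 0 else ∏ j ∈ Finset.range (k / 2), (2 * (j : ℝ) + 1)

set_option maxHeartbeats 1600000

lemma erw_contraction {u r w : ℕ → ℝ} {c : ℝ} (hc : 0 < c)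
    (hrec : ∀ n, 1 ≤ n → u (n + 1) = r n * u n + w n)
    (hr : Tendsto (fun n : ℕ => (n : ℝ) * (r n - 1)) atTop (nhds (-c)))
    (hw : Tendsto (fun n : ℕ => (n : ℝ) * w n) atTop (nhds 0)) :
    Tendsto u atTop (nhds 0) := by
  rw [Metric.tendsto_atTop]
  intro ε hε
  set δ : ℝ := c * ε / 4 with hδdef
  have hδ : 0 < δ := by positivity
  have h1 : ∀ᶠ n : ℕ in atTop, (n : ℝ) * (r n - 1) ≤ -c / 2 :=
    hr.eventually_le_const (by linarith)
  have h2 : ∀ᶠ n : ℕ in atTop, 0 ≤ r n := by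
    have hrt : Tendsto (fun n : ℕ => r n - 1) atTop (nhds 0) := by
      have h := hr.mul tendsto_one_div_atTop_nhds_zero_nat
      rw [mul_zero] at h
      apply h.congr'
      filter_upwards [eventually_ge_atTop 1] with n hn
      have : (n:ℝ) ≠ 0 := by positivity
      field_simp
    have := hrt.eventually (eventually_ge_nhds (show (-1:ℝ)/2 < 0 by norm_num))
    filter_upwards [this] with n hn; linarith
  have h3 : ∀ᶠ n : ℕ in atTop, |(n : ℝ) * w n| ≤ δ := by
    have h := hw.abs
    rw [abs_zero] at h
    exact h.eventually_le_const hδ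
  rcases ((h1.and (h2.and h3)).and (eventually_ge_atTop 1)).exists_forall_of_atTop with ⟨N, hN⟩
  have key : ∀ n, N ≤ n →
      0 ≤ r n ∧ r n ≤ 1 - c / (2 * n) ∧ |w n| ≤ δ / n ∧ 1 ≤ n := by
    intro n hn
    obtain ⟨⟨hA, hB, hC⟩, hn1⟩ := hN n hn
    have hnpos : (0:ℝ) < n := by exact_mod_cast hn1
    refine ⟨hB, ?_, ?_, hn1⟩
    · have h' : c / 2 ≤ (1 - r n) * n := by nlinarith
      have : c / (2 * n) ≤ 1 - r n := by
        rw [div_le_iff₀ (by positivity)]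
        nlinarith
      linarith
    · rw [le_div_iff₀ hnpos]
      calc |w n| * n = |(n:ℝ) * w n| := by
            rw [abs_mul, abs_of_nonneg hnpos.le]; ring
        _ ≤ δ := hC
  have step : ∀ n, N ≤ n → |u (n + 1)| ≤ (1 - c / (2 * n)) * |u n| + δ / n := by
    intro n hn
    obtain ⟨hr0, hr1, hwb, hn1⟩ := key n hn
    rw [hrec n hn1]
    calc |r n * u n + w n| ≤ |r n * u n| + |w n| := abs_add_le _ _
      _ = r n * |u n| + |w n| := by rw [abs_mul, abs_of_nonneg hr0]
      _ ≤ (1 - c / (2 * n)) * |u n| + δ / n :=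
        add_le_add (mul_le_mul_of_nonneg_right hr1 (abs_nonneg _)) hwb
  -- escape: there is some m ≥ N with |u m| ≤ 3δ/c
  have escape : ∃ m, N ≤ m ∧ |u m| ≤ 3 * δ / c := by
    by_contra h
    push_neg at h
    have dec : ∀ n, N ≤ n → |u (n + 1)| ≤ |u n| - δ / 2 * (1 / n) := by
      intro n hn
      have h3d := h n hn
      have hst := step n hn
      have hn1 := (key n hn).2.2.2
      have hnpos : (0:ℝ) < n := by exact_mod_cast hn1
      have hfrac : (0:ℝ) < c / (2 * n) := by positivity
      have hmul : c / (2 * n) * (3 * δ / c) ≤ c / (2 * n) * |u n| :=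
        mul_le_mul_of_nonneg_left h3d.le hfrac.le
      have e1 : c / (2 * n) * (3 * δ / c) = 3 * (δ / 2) * (1 / n) := by
        field_simp
      have e2 : (1 - c / (2 * n)) * |u n| = |u n| - c / (2 * n) * |u n| := by ring
      have e3 : δ / n = 2 * (δ / 2) * (1 / n) := by ring
      rw [e1] at hmul
      linarith
    have iter : ∀ j, |u (N + j)| ≤ |u N| - δ / 2 * ∑ i ∈ Finset.range j, 1 / ((N : ℝ) + i) := by
      intro j
      induction j with
      | zero => simp
      | succ j ih =>
        have hd := dec (N + j) (Nat.le_add_right _ _)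
        rw [Finset.sum_range_succ, show N + (j + 1) = (N + j) + 1 from rfl]
        have hcast : ((N + j : ℕ) : ℝ) = (N : ℝ) + j := by push_cast; ring
        rw [hcast] at hd
        calc |u ((N + j) + 1)| ≤ |u (N + j)| - δ / 2 * (1 / ((N:ℝ) + j)) := hd
          _ ≤ _ := by rw [mul_add]; linarith
    have hdiv : Tendsto (fun j : ℕ => ∑ i ∈ Finset.range j, 1 / ((N : ℝ) + i)) atTop atTop := by
      have hH := Real.tendsto_sum_range_one_div_nat_succ_atTop
      have hcomp : Tendsto (fun j : ℕ => ∑ i ∈ Finset.range (N + j), (1 / (i + 1) : ℝ))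
          atTop atTop := hH.comp (tendsto_atTop_atTop_of_monotone (fun a b h => by omega) (fun b => ⟨b, by omega⟩))
      have hsub : Tendsto
          (fun j : ℕ => ∑ i ∈ Finset.range (N + j), (1 / (i + 1) : ℝ)
            - ∑ i ∈ Finset.range N, (1 / (i + 1) : ℝ)) atTop atTop :=
        tendsto_atTop_add_const_right atTop _ hcomp
      apply tendsto_atTop_mono _ hsub
      intro j
      rw [Finset.sum_range_add]
      have : ∀ i ∈ Finset.range j, (1 / ((N + i : ℕ) + 1) : ℝ) ≤ 1 / ((N : ℝ) + i) := by
        intro i hi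
        apply one_div_le_one_div_of_le
        · have : 0 < N := by
            rcases Nat.eq_zero_or_pos N with h0 | h0
            · exact absurd (hN N le_rfl).2 (by omega)
            · exact h0
          positivity
        · push_cast; linarith
      calc ∑ i ∈ Finset.range N, (1/(i+1):ℝ) + ∑ i ∈ Finset.range j, (1/((N+i:ℕ)+1):ℝ)
            - ∑ i ∈ Finset.range N, (1/(i+1):ℝ)
          = ∑ i ∈ Finset.range j, (1/((N+i:ℕ)+1):ℝ) := by ring
        _ ≤ ∑ i ∈ Finset.range j, 1 / ((N : ℝ) + i) := Finset.sum_le_sum this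
    obtain ⟨j, hj⟩ := (hdiv.eventually_ge_atTop ((|u N| + 1) * (2 / δ))).exists
    have hiter := iter j
    have hpos := h (N + j) (Nat.le_add_right _ _)
    have habs : (0:ℝ) ≤ |u (N + j)| := abs_nonneg _
    have : δ / 2 * (((|u N| + 1) * (2 / δ))) ≤ δ / 2 * ∑ i ∈ Finset.range j, 1 / ((N : ℝ) + i) :=
      mul_le_mul_of_nonneg_left hj (by positivity)
    have e4 : δ / 2 * ((|u N| + 1) * (2 / δ)) = |u N| + 1 := by field_simp
    rw [e4] at this
    linarith
  obtain ⟨m, hm, hum⟩ := escape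
  have trap : ∀ n, m ≤ n → |u n| ≤ 3 * δ / c := by
    intro n hn
    induction n, hn using Nat.le_induction with
    | base => exact hum
    | succ n hn ih =>
      have hNn : N ≤ n := le_trans hm hn
      obtain ⟨hr0, hr1, hwb, hn1⟩ := key n hNn
      have hnpos : (0:ℝ) < n := by exact_mod_cast hn1
      have hst := step n hNn
      have hnonneg : 0 ≤ 1 - c / (2 * n) := le_trans hr0 hr1
      have hmul : (1 - c / (2 * n)) * |u n| ≤ (1 - c / (2 * n)) * (3 * δ / c) :=
        mul_le_mul_of_nonneg_left ih hnonneg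
      have e1 : c / (2 * n) * (3 * δ / c) = 3 * (δ / 2) * (1 / n) := by
        field_simp
      have e5 : (1 - c / (2 * n)) * (3 * δ / c) = 3 * δ / c - c / (2 * n) * (3 * δ / c) := by ring
      have e3 : δ / n = 2 * (δ / 2) * (1 / n) := by ring
      have hpos : 0 < δ / 2 * (1 / n) := by positivity
      rw [e5, e1] at hmul
      linarith
  refine ⟨m, fun n hn => ?_⟩
  rw [Real.dist_eq, sub_zero]
  have := trap n hn
  have e6 : 3 * δ / c = 3 / 4 * ε := by rw [hδdef]; field_simp
  rw [e6] at this
  linarith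

lemma erw_contraction' {u r e : ℕ → ℝ} {c L : ℝ} (hc : 0 < c)
    (hrec : ∀ n, 1 ≤ n → u (n + 1) = r n * u n + e n)
    (hr : Tendsto (fun n : ℕ => (n : ℝ) * (r n - 1)) atTop (nhds (-c)))
    (he : Tendsto (fun n : ℕ => (n : ℝ) * e n) atTop (nhds L)) :
    Tendsto u atTop (nhds (L / c)) := by
  set M := L / c with hM
  have hv : Tendsto (fun n => u n - M) atTop (nhds 0) := by
    apply erw_contraction (w := fun n => e n + (r n - 1) * M) hc
    · intro n hn
      rw [hrec n hn]; ring
    · exact hr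
    · have := he.add (hr.mul_const M)
      have hz : L + -c * M = 0 := by
        rw [hM]; field_simp; ring
      rw [hz] at this
      apply this.congr
      intro n; ring
  have := hv.add_const M
  simpa using this

/-- Main recurrence asymptotics: if `t (n+1) = (1 + β/n) t n + d n` and
`d n / n^(γ-1) → L` with `β < γ`, then `t n / n^γ → L / (γ - β)`. -/
lemma erw_recurrence {t d : ℕ → ℝ} {β γ L : ℝ} (hβγ : β < γ)
    (hrec : ∀ n, 1 ≤ n → t (n + 1) = (1 + β / n) * t n + d n)
    (hd : Tendsto (fun n : ℕ => d n / (n : ℝ) ^ (γ - 1)) atTop (nhds L)) :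
    Tendsto (fun n : ℕ => t n / (n : ℝ) ^ γ) atTop (nhds (L / (γ - β))) := by
  set r : ℕ → ℝ := fun n => (1 + β / n) * ((n : ℝ) ^ γ / ((n : ℝ) + 1) ^ γ) with hrdef
  set e : ℕ → ℝ := fun n => d n / ((n : ℝ) + 1) ^ γ with hedef
  have hc : 0 < γ - β := by linarith
  have hrec' : ∀ n, 1 ≤ n → t (n + 1) / ((n + 1 : ℕ) : ℝ) ^ γ
      = r n * (t n / (n : ℝ) ^ γ) + e n := by
    intro n hn
    have hnpos : (0:ℝ) < n := by exact_mod_cast hn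
    have hpow : (0:ℝ) < (n : ℝ) ^ γ := Real.rpow_pos_of_pos hnpos _
    have hpow1 : (0:ℝ) < ((n : ℝ) + 1) ^ γ := Real.rpow_pos_of_pos (by linarith) _
    rw [hrec n hn]
    push_cast
    simp only [hrdef, hedef]
    field_simp
  -- limit of n * (r n - 1)
  have hslope : Tendsto (fun n : ℕ => (n : ℝ) * (r n - 1)) atTop (nhds (-(γ - β))) := by
    have hf : HasDerivAt (fun x : ℝ => (1 + β * x) * (1 + x) ^ (-γ)) (β - γ) 0 := by
      have h1 : HasDerivAt (fun x : ℝ => 1 + β * x) β 0 := by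
        simpa using ((hasDerivAt_id 0).const_mul β).const_add 1
      have h2 : HasDerivAt (fun x : ℝ => (1 + x) ^ (-γ)) (-γ) 0 := by
        have hb : HasDerivAt (fun x : ℝ => 1 + x) 1 0 := by
          simpa using (hasDerivAt_id (0:ℝ)).const_add 1
        have hr1 : HasDerivAt (fun y : ℝ => y ^ (-γ)) (-γ * (1:ℝ) ^ (-γ - 1)) ((fun x : ℝ => 1 + x) 0) := by
          rw [show ((fun x : ℝ => 1 + x) 0) = 1 by norm_num]
          exact Real.hasDerivAt_rpow_const (Or.inl one_ne_zero)
        have := hr1.comp 0 hb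
        simpa [Function.comp_def, Real.one_rpow] using this
      have hmul := h1.mul h2
      simp only [mul_zero, add_zero, Real.one_rpow, mul_one, one_mul] at hmul
      rw [sub_eq_add_neg]; exact hmul
    have hts := hasDerivAt_iff_tendsto_slope.mp hf
    have hinv : Tendsto (fun n : ℕ => 1 / (n : ℝ)) atTop (nhdsWithin 0 {x | x ≠ 0}) := by
      apply tendsto_nhdsWithin_of_tendsto_nhds_of_eventually_within
      · exact tendsto_one_div_atTop_nhds_zero_nat
      · filter_upwards [eventually_ge_atTop 1] with n hn
        have : (0:ℝ) < n := by exact_mod_cast hn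
        simp [Set.mem_setOf_eq]
        positivity
    have hco := hts.comp hinv
    have hfin : Tendsto (fun n : ℕ => (n : ℝ) * (r n - 1)) atTop (nhds (β - γ)) := by
      apply hco.congr'
      filter_upwards [eventually_ge_atTop 1] with n hn
      have hnpos : (0:ℝ) < n := by exact_mod_cast hn
      have hn0 : (n:ℝ) ≠ 0 := hnpos.ne'
      have hval : (1 + β * (1 / (n:ℝ))) * (1 + 1 / (n:ℝ)) ^ (-γ) = r n := by
        simp only [hrdef]
        congr 1
        · field_simp
        · rw [show (1 + 1 / (n:ℝ)) = ((n:ℝ) + 1) / n by field_simp]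
          rw [Real.div_rpow (by linarith) hnpos.le, Real.rpow_neg (by linarith),
            Real.rpow_neg hnpos.le]
          field_simp
      have hval0 : (1 + β * (0:ℝ)) * (1 + (0:ℝ)) ^ (-γ) = 1 := by norm_num
      simp only [Function.comp_apply, slope_def_field]
      rw [hval, hval0]
      field_simp
      ring
    rw [show -(γ - β) = β - γ by ring]
    exact hfin
  have hq : Tendsto (fun n : ℕ => (n : ℝ) ^ γ / ((n : ℝ) + 1) ^ γ) atTop (nhds 1) := by
    have hb : Tendsto (fun n : ℕ => (n : ℝ) / ((n : ℝ) + 1)) atTop (nhds 1) :=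
      tendsto_natCast_div_add_atTop (1 : ℝ)
    have hpr := hb.rpow_const (p := γ) (Or.inl one_ne_zero)
    rw [Real.one_rpow] at hpr
    apply hpr.congr
    intro n
    exact Real.div_rpow (Nat.cast_nonneg n) (by positivity) γ
  have hw : Tendsto (fun n : ℕ => (n : ℝ) * e n) atTop (nhds L) := by
    have hmul := hd.mul hq
    rw [mul_one] at hmul
    apply hmul.congr'
    filter_upwards [eventually_ge_atTop 1] with n hn
    have hnpos : (0:ℝ) < n := by exact_mod_cast hn
    have h1 : (0:ℝ) < (n:ℝ) + 1 := by linarith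
    have hpow1 : (0:ℝ) < ((n : ℝ) + 1) ^ γ := Real.rpow_pos_of_pos h1 _
    have hpow : (0:ℝ) < (n : ℝ) ^ (γ - 1) := Real.rpow_pos_of_pos hnpos _
    simp only [hedef]
    have e7 : (n:ℝ) ^ γ = (n:ℝ) ^ (γ - 1) * n := by
      rw [show γ = (γ - 1) + 1 by ring, Real.rpow_add_one hnpos.ne']
      ring_nf
    rw [e7]
    field_simp
  exact erw_contraction' (u := fun n => t n / (n : ℝ) ^ γ) hc hrec' hslope hw

lemma tendsto_div_rpow_zero {A : ℕ → ℝ} {a b Λ : ℝ}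
    (hA : Tendsto (fun n : ℕ => A n / (n:ℝ) ^ a) atTop (nhds Λ)) (hab : a < b) :
    Tendsto (fun n : ℕ => A n / (n:ℝ) ^ b) atTop (nhds 0) := by
  have hpow : Tendsto (fun n : ℕ => (n:ℝ) ^ (a - b)) atTop (nhds 0) := by
    have h1 := tendsto_rpow_neg_atTop (show 0 < b - a by linarith)
    have h2 := h1.comp (tendsto_natCast_atTop_atTop (R := ℝ))
    simpa only [Function.comp_def, neg_sub] using h2
  have hmul := hA.mul hpow
  rw [mul_zero] at hmul
  apply hmul.congr'
  filter_upwards [eventually_ge_atTop 1] with n hn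
  have hnpos : (0:ℝ) < n := by exact_mod_cast hn
  have ha1 : (n:ℝ) ^ a ≠ 0 := (Real.rpow_pos_of_pos hnpos a).ne'
  have ha2 : (n:ℝ) ^ b ≠ 0 := (Real.rpow_pos_of_pos hnpos b).ne'
  rw [Real.rpow_sub hnpos]
  field_simp

lemma gaussMoment_rec (m : ℕ) : gaussMoment (m + 2) = ((m:ℝ) + 1) * gaussMoment m := by
  unfold gaussMoment
  rcases Nat.even_or_odd m with he | ho
  · have h1 : ¬ Odd m := Nat.not_odd_iff_even.mpr he
    have h2 : ¬ Odd (m + 2) := by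
      rw [Nat.odd_add]; simpa using h1
    rw [if_neg h1, if_neg h2]
    have h3 : (m + 2) / 2 = m / 2 + 1 := by omega
    rw [h3, Finset.prod_range_succ]
    have h4 : (2 * ((m / 2 : ℕ):ℝ) + 1) = (m:ℝ) + 1 := by
      obtain ⟨t, rfl⟩ := he
      rw [show t + t = 2 * t by ring, Nat.mul_div_cancel_left t (by norm_num)]
      push_cast; ring
    rw [h4]; ring
  · have h2 : Odd (m + 2) := by rw [Nat.odd_add]; simpa using ho
    rw [if_pos ho, if_pos h2, mul_zero]

section Prob
variable {Ω : Type*} [MeasurableSpace Ω] {μ : Measure Ω} {p q : ℝ} {X : ℕ → Ω → ℝ}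

lemma erw_filt_le (X : ℕ → Ω → ℝ) (hX : ∀ i, Measurable (X i)) (n : ℕ) :
    erwFiltration X n ≤ ‹MeasurableSpace Ω› := by
  apply iSup_le; intro i; apply iSup_le; intro _
  exact (hX i).comap_le

lemma erw_S_meas (hX : ∀ i, Measurable (X i)) (n : ℕ) :
    Measurable[erwFiltration X n] (erwS X n) := by
  unfold erwS
  apply Finset.measurable_sum
  intro i hi
  have h1 : MeasurableSpace.comap (X i) inferInstance ≤ erwFiltration X n := by
    exact le_iSup₂ (f := fun i _ => MeasurableSpace.comap (X i) inferInstance) i hi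
  exact (measurable_iff_comap_le.mpr le_rfl).mono h1 le_rfl

lemma erw_S_bound (h : IsERW μ p q X) (n : ℕ) :
    ∀ᵐ ω ∂μ, |erwS X n ω| ≤ n := by
  have hall : ∀ᵐ ω ∂μ, ∀ i, i ∈ Finset.Icc 1 n → |X i ω| ≤ 1 := by
    rw [ae_all_iff]
    intro i
    by_cases hi : i ∈ Finset.Icc 1 n
    · have h1 : 1 ≤ i := (Finset.mem_Icc.mp hi).1
      filter_upwards [h.pm_one i h1] with ω hω _
      rcases hω with hω | hω <;> rw [hω] <;> norm_num
    · filter_upwards with ω hi' using absurd hi' hi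
  filter_upwards [hall] with ω hω
  calc |erwS X n ω| ≤ ∑ i ∈ Finset.Icc 1 n, |X i ω| := Finset.abs_sum_le_sum_abs _ _
    _ ≤ ∑ i ∈ Finset.Icc 1 n, 1 := Finset.sum_le_sum hω
    _ = n := by simp

lemma erw_integrable (h : IsERW μ p q X) {f : Ω → ℝ} (hf : Measurable f) {C : ℝ}
    (hb : ∀ᵐ ω ∂μ, |f ω| ≤ C) : Integrable f μ := by
  haveI := h.prob
  exact (integrable_const C).mono' hf.aestronglyMeasurable
    (by filter_upwards [hb] with ω hω using by simpa using hω)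

lemma erw_S_measG (hX : ∀ i, Measurable (X i)) (n : ℕ) : Measurable (erwS X n) :=
  (erw_S_meas hX n).mono (erw_filt_le X hX n) le_rfl

/-- Key martingale-type identity: `∫ Sₙ^m X_{n+1} = (α/n) ∫ Sₙ^(m+1)`. -/
lemma erw_key (h : IsERW μ p q X) (n : ℕ) (hn : 1 ≤ n) (m : ℕ) :
    ∫ ω, (erwS X n ω) ^ m * X (n + 1) ω ∂μ
      = ((2 * p - 1) / n) * ∫ ω, (erwS X n ω) ^ (m + 1) ∂μ := by
  haveI := h.prob
  set α := 2 * p - 1 with hα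
  set S := erwS X n with hS
  set g : Ω → ℝ := ({ω' | X (n + 1) ω' = 1}.indicator fun _ => (1:ℝ)) with hg
  have hle := erw_filt_le X h.meas n
  have hSmeas : Measurable S := erw_S_measG h.meas n
  have hSb := erw_S_bound h n
  have hgmeas : Measurable g :=
    measurable_const.indicator ((h.meas (n+1)) (measurableSet_singleton 1))
  have hgb : ∀ ω, |g ω| ≤ 1 := by
    intro ω; rw [hg]
    by_cases hω : ω ∈ {ω' | X (n + 1) ω' = 1} <;>
      simp [Set.indicator_of_mem, Set.indicator_of_notMem, hω]
  have hXg : (fun ω => X (n+1) ω) =ᵐ[μ] fun ω => 2 * g ω - 1 := by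
    filter_upwards [h.pm_one (n+1) (by omega)] with ω hω
    rcases hω with hω | hω
    · have hmem : ω ∈ {ω' | X (n + 1) ω' = 1} := hω
      simp only [hg, Set.indicator_of_mem hmem, hω]; norm_num
    · have hmem : ω ∉ {ω' | X (n + 1) ω' = 1} := by
        simp only [Set.mem_setOf_eq, hω]; norm_num
      simp only [hg, Set.indicator_of_notMem hmem, hω]; norm_num
  have hn0 : (0:ℝ) < n := by exact_mod_cast hn
  -- integrability
  have hintSm : ∀ j : ℕ, Integrable (fun ω => S ω ^ j) μ := by
    intro j
    apply erw_integrable h (hSmeas.pow_const j)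
    filter_upwards [hSb] with ω hω
    rw [abs_pow]
    exact pow_le_pow_left₀ (abs_nonneg _) hω j
  have hintSg : Integrable (fun ω => S ω ^ m * g ω) μ := by
    apply erw_integrable h ((hSmeas.pow_const m).mul hgmeas) (C := (n:ℝ)^m * 1)
    filter_upwards [hSb] with ω hω
    rw [Pi.mul_apply, abs_mul, abs_pow]
    exact mul_le_mul (pow_le_pow_left₀ (abs_nonneg _) hω m) (hgb ω) (abs_nonneg _)
      (by positivity)
  have hintg : Integrable g μ :=
    erw_integrable h hgmeas (Filter.Eventually.of_forall hgb)
  -- pull-out property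
  have hpull : μ[(fun ω => S ω ^ m * g ω) | erwFiltration X n]
      =ᵐ[μ] fun ω => S ω ^ m * (μ[g | erwFiltration X n]) ω := by
    have hfm : StronglyMeasurable[erwFiltration X n] (fun ω => S ω ^ m) :=
      ((erw_S_meas h.meas n).pow_const m).stronglyMeasurable
    exact condExp_mul_of_stronglyMeasurable_left hfm hintSg hintg
  have hint1 : ∫ ω, S ω ^ m * g ω ∂μ
      = ∫ ω, S ω ^ m * ((1 + α * S ω / n) / 2) ∂μ := by
    rw [← integral_condExp hle (f := fun ω => S ω ^ m * g ω)]
    exact integral_congr_ae (hpull.trans ((h.cond n hn).mono fun ω hω => by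
      dsimp only; rw [hω]))
  have hsplit : ∀ ω : Ω, S ω ^ m * ((1 + α * S ω / n) / 2)
      = (1/2) * S ω ^ m + (α / (2 * n)) * S ω ^ (m + 1) := by
    intro ω; field_simp; ring
  have hint2 : ∫ ω, S ω ^ m * ((1 + α * S ω / n) / 2) ∂μ
      = (1/2) * (∫ ω, S ω ^ m ∂μ) + (α / (2 * n)) * ∫ ω, S ω ^ (m+1) ∂μ := by
    simp only [hsplit]
    rw [integral_add (((hintSm m).const_mul _)) (((hintSm (m+1)).const_mul _)),
      integral_const_mul, integral_const_mul]
  have hmain : ∫ ω, S ω ^ m * X (n + 1) ω ∂μ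
      = 2 * (∫ ω, S ω ^ m * g ω ∂μ) - ∫ ω, S ω ^ m ∂μ := by
    have he : (fun ω => S ω ^ m * X (n+1) ω) =ᵐ[μ]
        fun ω => 2 * (S ω ^ m * g ω) - S ω ^ m := by
      filter_upwards [hXg] with ω hω
      rw [show X (n+1) ω = 2 * g ω - 1 from hω]; ring
    rw [integral_congr_ae he, integral_sub ((hintSg.const_mul 2)) (hintSm m),
      integral_const_mul]
  rw [hmain, hint1, hint2]
  ring

/-- Binomial expansion of the moment recursion. -/
lemma erw_moment_rec (h : IsERW μ p q X) (n : ℕ) (hn : 1 ≤ n) (k : ℕ) :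
    ∫ ω, erwS X (n+1) ω ^ k ∂μ
      = ∑ i ∈ Finset.range (k+1), (k.choose i : ℝ) *
          (if Even (k - i) then ∫ ω, erwS X n ω ^ i ∂μ
           else ((2*p-1)/n) * ∫ ω, erwS X n ω ^ (i+1) ∂μ) := by
  haveI := h.prob
  set S := erwS X n with hS
  have hSmeas : Measurable S := erw_S_measG h.meas n
  have hSb := erw_S_bound h n
  have hexp : ∀ᵐ ω ∂μ, erwS X (n+1) ω ^ k
      = ∑ i ∈ Finset.range (k+1),
          (S ω ^ i * (if Even (k-i) then 1 else X (n+1) ω)) * (k.choose i : ℝ) := by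
    filter_upwards [h.pm_one (n+1) (by omega)] with ω hω
    have hS1 : erwS X (n+1) ω = S ω + X (n+1) ω := by
      rw [hS, erwS, erwS, Finset.sum_Icc_succ_top (by omega : 1 ≤ n+1)]
    rw [hS1, add_pow]
    apply Finset.sum_congr rfl
    intro i _
    congr 1
    congr 1
    rcases hω with hω | hω
    · rw [hω]; simp
    · rw [hω]
      rcases Nat.even_or_odd (k - i) with he | ho
      · simp [he.neg_one_pow, he]
      · simp [ho.neg_one_pow, Nat.not_even_iff_odd.mpr ho]
  rw [integral_congr_ae hexp]
  have hintSm : ∀ j : ℕ, Integrable (fun ω => S ω ^ j) μ := by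
    intro j
    apply erw_integrable h (hSmeas.pow_const j)
    filter_upwards [hSb] with ω hω
    rw [abs_pow]
    exact pow_le_pow_left₀ (abs_nonneg _) hω j
  have hintSX : ∀ j : ℕ, Integrable (fun ω => S ω ^ j * X (n+1) ω) μ := by
    intro j
    apply erw_integrable h ((hSmeas.pow_const j).mul (h.meas (n+1))) (C := (n:ℝ)^j * 1)
    filter_upwards [hSb, h.pm_one (n+1) (by omega)] with ω hω hω'
    rw [Pi.mul_apply, abs_mul, abs_pow]
    refine mul_le_mul (pow_le_pow_left₀ (abs_nonneg _) hω j) ?_ (abs_nonneg _) (by positivity)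
    rcases hω' with h1 | h1 <;> rw [h1] <;> norm_num
  have hint : ∀ i ∈ Finset.range (k+1), Integrable
      (fun ω => (S ω ^ i * (if Even (k-i) then 1 else X (n+1) ω)) * (k.choose i : ℝ)) μ := by
    intro i _
    rcases Nat.even_or_odd (k - i) with he | ho
    · simp only [if_pos he, mul_one]
      exact (hintSm i).mul_const _
    · simp only [if_neg (Nat.not_even_iff_odd.mpr ho)]
      exact (hintSX i).mul_const _
  rw [integral_finset_sum _ hint]
  apply Finset.sum_congr rfl
  intro i _
  rcases Nat.even_or_odd (k - i) with he | ho
  · simp only [if_pos he, mul_one]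
    rw [integral_mul_const]
    ring
  · simp only [if_neg (Nat.not_even_iff_odd.mpr ho)]
    rw [integral_mul_const, erw_key h n hn i]
    ring

end Prob


open MeasureTheory ProbabilityTheory Filter in
lemma erw_main {Ω : Type*} [MeasurableSpace Ω] {μ : MeasureTheory.Measure Ω}
    {p q α : ℝ} {X : ℕ → Ω → ℝ} (h : IsERW μ p q X)
    (hα : α = 2 * p - 1) (h2 : α < 1 / 2) (k : ℕ) :
    Filter.Tendsto (fun n : ℕ => (∫ ω, erwS X n ω ^ k ∂μ) / (n:ℝ) ^ ((k:ℝ)/2)) Filter.atTop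
      (nhds (gaussMoment k / (1 - 2*α) ^ ((k:ℝ)/2))) := by
  haveI := h.prob
  have hc : (0:ℝ) < 1 - 2*α := by linarith
  induction k using Nat.strong_induction_on with
  | _ k IH =>
  rcases Nat.eq_zero_or_pos k with rfl | hk
  · simp only [pow_zero, Nat.cast_zero, zero_div, Real.rpow_zero, div_one, integral_const,
      measure_univ, ENNReal.toReal_one, probReal_univ, smul_eq_mul, mul_one]
    rw [show gaussMoment 0 = (1:ℝ) by unfold gaussMoment; norm_num]
    exact tendsto_const_nhds
  set c : ℝ := 1 - 2*α with hcdef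
  set a : ℕ → ℕ → ℝ := fun n j => ∫ ω, erwS X n ω ^ j ∂μ with hadef
  set d : ℕ → ℝ := fun n => ∑ i ∈ Finset.range (k-1), (k.choose i : ℝ) *
      (if Even (k - i) then a n i else (α/n) * a n (i+1)) with hddef
  have hrec : ∀ n, 1 ≤ n → a (n+1) k = (1 + ((k:ℝ)*α)/n) * a n k + d n := by
    intro n hn
    have hmr := erw_moment_rec h n hn k
    rw [← hα] at hmr
    obtain ⟨k', hk'⟩ : ∃ k', k = k' + 1 := ⟨k-1, by omega⟩
    subst hk'
    rw [show k' + 1 + 1 = k' + 2 from rfl, Finset.sum_range_succ, Finset.sum_range_succ] at hmr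
    have e1 : (k' + 1) - (k' + 1) = 0 := by omega
    have e2 : (k' + 1) - k' = 1 := by omega
    rw [e1, e2] at hmr
    simp only [Nat.choose_self, Nat.choose_succ_self_right, Even.zero, if_pos, Nat.cast_one,
      if_neg (by norm_num : ¬ Even 1)] at hmr
    simp only [hadef, hddef, show k' + 1 - 1 = k' from rfl]
    rw [hmr]
    push_cast
    ring
  set L : ℝ := if 2 ≤ k then (k.choose 2 : ℝ) * (gaussMoment (k-2) / c ^ (((k-2:ℕ):ℝ)/2))
      else 0 with hLdef
  have hd : Tendsto (fun n : ℕ => d n / (n:ℝ) ^ ((k:ℝ)/2 - 1)) atTop (nhds L) := by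
    have hsum : ∀ n : ℕ, d n / (n:ℝ) ^ ((k:ℝ)/2 - 1)
        = ∑ i ∈ Finset.range (k-1), ((k.choose i : ℝ) *
            (if Even (k - i) then a n i else (α/n) * a n (i+1))) / (n:ℝ) ^ ((k:ℝ)/2 - 1) := by
      intro n; rw [hddef]; exact Finset.sum_div _ _ _
    simp only [hsum]
    have hL : L = ∑ i ∈ Finset.range (k-1),
        (if i = k-2 then (k.choose 2 : ℝ) * (gaussMoment (k-2) / c ^ (((k-2:ℕ):ℝ)/2)) else 0) := by
      rw [Finset.sum_ite_eq' (Finset.range (k-1)) (k-2)]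
      rw [hLdef]
      have hmem : (k-2 ∈ Finset.range (k-1)) ↔ 2 ≤ k := by rw [Finset.mem_range]; omega
      by_cases h2k : 2 ≤ k
      · rw [if_pos h2k, if_pos (hmem.mpr h2k)]
      · rw [if_neg h2k, if_neg (fun hmm => h2k (hmem.mp hmm))]
    rw [hL]
    apply tendsto_finset_sum
    intro i hi
    simp only [hadef]
    have hik : i < k - 1 := Finset.mem_range.mp hi
    have hk2 : 2 ≤ k := by omega
    rcases Nat.even_or_odd (k - i) with he | ho
    · simp only [if_pos he]
      by_cases hi2 : i = k-2
      · subst hi2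
        rw [if_pos rfl]
        have hIH := (IH (k-2) (by omega)).const_mul ((k.choose 2 : ℝ))
        have hexp : ((k:ℝ)/2 - 1) = (((k-2:ℕ)):ℝ)/2 := by
          rw [Nat.cast_sub (by omega)]; push_cast; ring
        apply hIH.congr
        intro n
        rw [hexp, show (k.choose (k-2):ℝ) = (k.choose 2:ℝ) by
          norm_cast; exact Nat.choose_symm (by omega), mul_div_assoc]
      · rw [if_neg hi2]
        have hilt : i < k - 2 := by omega
        have h0 := tendsto_div_rpow_zero (IH i (by omega))
          (show (i:ℝ)/2 < (k:ℝ)/2 - 1 by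
            have : (i:ℝ) + 2 < (k:ℝ) := by exact_mod_cast (by omega : i + 2 < k)
            linarith)
        have := h0.const_mul ((k.choose i : ℝ))
        rw [mul_zero] at this
        apply this.congr
        intro n
        rw [mul_div_assoc]
    · simp only [if_neg (Nat.not_even_iff_odd.mpr ho)]
      have hne : ¬ (i = k - 2) := by
        intro hi2
        subst hi2
        rw [show k - (k-2) = 2 by omega] at ho
        exact (Nat.not_odd_iff_even.mpr (by norm_num)) ho
      rw [if_neg hne]
      have h0 := tendsto_div_rpow_zero (IH (i+1) (by omega))
        (show ((i+1:ℕ):ℝ)/2 < (k:ℝ)/2 by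
          have : ((i:ℝ) + 1) < (k:ℝ) := by exact_mod_cast (by omega : i + 1 < k)
          push_cast
          linarith)
      have hz := h0.const_mul ((k.choose i : ℝ) * α)
      rw [mul_zero] at hz
      apply hz.congr'
      filter_upwards [eventually_ge_atTop 1] with n hn
      have hn0 : (0:ℝ) < n := by exact_mod_cast hn
      have hfact : (n:ℝ) ^ ((k:ℝ)/2) = (n:ℝ) ^ ((k:ℝ)/2 - 1) * n := by
        rw [← Real.rpow_add_one hn0.ne' ((k:ℝ)/2 - 1)]
        norm_num
      have hne1 : (n:ℝ) ^ ((k:ℝ)/2 - 1) ≠ 0 := (Real.rpow_pos_of_pos hn0 _).ne'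
      rw [hfact]
      generalize hP : (n:ℝ) ^ ((k:ℝ)/2 - 1) = P at hne1 ⊢
      field_simp
  have hkpos : (0:ℝ) < k := by exact_mod_cast hk
  have hβγ : (k:ℝ)*α < (k:ℝ)/2 := by nlinarith
  have hmain := erw_recurrence (t := fun n => a n k) hβγ hrec hd
  have hfinal : L / ((k:ℝ)/2 - (k:ℝ)*α) = gaussMoment k / c ^ ((k:ℝ)/2) := by
    by_cases h2k : 2 ≤ k
    · rw [hLdef, if_pos h2k]
      obtain ⟨m, hm⟩ : ∃ m, k = m + 2 := ⟨k-2, by omega⟩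
      subst hm
      have hc' : (0:ℝ) < 1 - 2*α := hc
      have hcm : c ^ ((m:ℝ)/2) ≠ 0 := (Real.rpow_pos_of_pos hc _).ne'
      have hD : (0:ℝ) < ((m+2:ℕ):ℝ)/2 - ((m+2:ℕ):ℝ)*α := by
        push_cast
        nlinarith [mul_pos (show (0:ℝ) < (m:ℝ)+2 by positivity) hc']
      have hCc : (0:ℝ) < c ^ (((m+2:ℕ):ℝ)/2) := Real.rpow_pos_of_pos hc _
      rw [div_eq_div_iff hD.ne' hCc.ne']
      rw [show m + 2 - 2 = m by omega, gaussMoment_rec m, Nat.cast_choose_two]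
      rw [show ((m+2:ℕ):ℝ) = (m:ℝ) + 2 by push_cast; ring]
      rw [show ((m:ℝ)+2)/2 = (m:ℝ)/2 + 1 by ring, Real.rpow_add_one hc.ne']
      rw [hcdef] at hcm ⊢
      field_simp
      ring
    · have hk1 : k = 1 := by omega
      subst hk1
      rw [hLdef, if_neg (by omega), zero_div,
        show gaussMoment 1 = 0 by unfold gaussMoment; simp]
      rw [zero_div]
  rw [← hfinal]
  exact hmain

open MeasureTheory ProbabilityTheory Filter in
/-- Moment central limit theorem in the diffusive regime −1 < α < 1/2. -/
theorem stmt_7 {Ω : Type*} [MeasurableSpace Ω] (μ : MeasureTheory.Measure Ω)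
    (p q α : ℝ) (X : ℕ → Ω → ℝ) (hERW : IsERW μ p q X)
    (hα : α = 2 * p - 1) (h1 : -1 < α) (h2 : α < 1 / 2) (k : ℕ) (hk : 1 ≤ k) :
    Tendsto
      (fun n : ℕ => ∫ ω, (erwS X n ω / Real.sqrt ((n : ℝ) / (1 - 2 * α))) ^ k ∂μ)
      atTop (nhds (gaussMoment k)) := by
  haveI := hERW.prob
  have hc : (0:ℝ) < 1 - 2*α := by linarith
  have hmain := (erw_main hERW hα h2 k).mul_const ((1 - 2*α) ^ ((k:ℝ)/2))
  have hcp : (0:ℝ) < (1 - 2*α) ^ ((k:ℝ)/2) := Real.rpow_pos_of_pos hc _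
  rw [div_mul_cancel₀ _ hcp.ne'] at hmain
  apply hmain.congr'
  filter_upwards [eventually_ge_atTop 1] with n hn
  have hn0 : (0:ℝ) < n := by exact_mod_cast hn
  have hx : (0:ℝ) < (n:ℝ) / (1 - 2*α) := by positivity
  have hsq : (Real.sqrt ((n:ℝ) / (1 - 2*α))) ^ k = ((n:ℝ) / (1 - 2*α)) ^ ((k:ℝ)/2) := by
    rw [← Real.rpow_natCast (Real.sqrt _) k, Real.sqrt_eq_rpow,
      ← Real.rpow_mul hx.le, show (1/2 * (k:ℝ)) = (k:ℝ)/2 by ring]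
  have hdiv : ((n:ℝ) / (1 - 2*α)) ^ ((k:ℝ)/2)
      = (n:ℝ) ^ ((k:ℝ)/2) / (1 - 2*α) ^ ((k:ℝ)/2) :=
    Real.div_rpow (by positivity) hc.le _
  have hint : ∫ ω, (erwS X n ω / Real.sqrt ((n : ℝ) / (1 - 2 * α))) ^ k ∂μ
      = (∫ ω, erwS X n ω ^ k ∂μ) / (Real.sqrt ((n:ℝ) / (1 - 2*α))) ^ k := by
    simp only [div_pow]
    exact integral_div _ _
  rw [show (1 - 2 * α) = (1 - 2*α) by ring] at *
  rw [hint, hsq, hdiv]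
  have hpow : (0:ℝ) < (n:ℝ) ^ ((k:ℝ)/2) := Real.rpow_pos_of_pos hn0 _
  field_simp
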